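/- Let v, f be integers with 0 ≤ f ≤ v-1 and v-f even. Under the action of the cyclic group generated by A_{v,f} on GF(2)^v, the number of fixed planes of type 7 equals the Gaussian binomial coefficient [f choose 3]_2 = (2^f-1)(2^{f-1}-1)(2^{f-2}-1)/21, and the number of fixed planes of type 1 equals (2^f-1)(2^{v-f}-1)/3, which is also the number of orbit triangles. -/

import Mathlib

/-!
Write `φ` for `x ↦ x ⬝ A_{v,f}`. Then `φ³ = 1`, and `π = 1 + φ + φ²` is the projection of
`GF(2)^v` onto the fixed space `W ≅ GF(2)^f` of `φ` along `U = ker π ≅ GF(2)^(v-f)`.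
A plane is pointwise fixed iff it lies in `W`, which gives the Gaussian binomial.
A vector `x` with nonzero components in both `U` and `W` ("mixed") has three distinct, linearly
independent images `x, φ x, φ² x`: they span a type-1 fixed plane and form an orbit triangle.
Conversely every type-1 plane and every orbit triangle comes from exactly the three mixed vectors
of one orbit, so both numbers are a third of the number `(2^f - 1)(2^(v-f) - 1)` of mixed vectors.
-/

/-- The action of a matrix `A` on subspaces of `GF(2)^v`, induced by the
right action `x ↦ x ⬝ A` on vectors. -/
def mapMat {v : ℕ} (A : Matrix (Fin v) (Fin v) (ZMod 2))
    (W : Submodule (ZMod 2) (Fin v → ZMod 2)) : Submodule (ZMod 2) (Fin v → ZMod 2) :=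
  W.map A.vecMulLinear

/-- The block-diagonal matrix `A_{v,f}` over `GF(2)`: `(v-f)/2` consecutive 2×2 blocks
`[[0,1],[1,1]]` on the diagonal, followed by the `f×f` identity matrix. -/
def Avf (v f : ℕ) : Matrix (Fin v) (Fin v) (ZMod 2) :=
  Matrix.of fun i j =>
    if (i : ℕ) < v - f then
      if (i : ℕ) % 2 = 0 then (if (j : ℕ) = (i : ℕ) + 1 then 1 else 0)
      else (if (j : ℕ) = (i : ℕ) - 1 ∨ (j : ℕ) = (i : ℕ) then 1 else 0)
    else (if j = i then 1 else 0)

/-- `E` is a fixed plane of `A`: a 3-dimensional subspace with `E⬝A = E`. -/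
def IsFixedPlane {v : ℕ} (A : Matrix (Fin v) (Fin v) (ZMod 2))
    (E : Submodule (ZMod 2) (Fin v → ZMod 2)) : Prop :=
  Module.finrank (ZMod 2) E = 3 ∧ mapMat A E = E

/-- A subspace is pointwise fixed by `A` (for a plane: "of type 7") if every
1-dimensional subspace of it is fixed by `A`. -/
def PointwiseFixed {v : ℕ} (A : Matrix (Fin v) (Fin v) (ZMod 2))
    (E : Submodule (ZMod 2) (Fin v → ZMod 2)) : Prop :=
  ∀ P : Submodule (ZMod 2) (Fin v → ZMod 2),
    Module.finrank (ZMod 2) P = 1 → P ≤ E → mapMat A P = P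

/-- An orbit triangle: an orbit of size 3 of `⟨A_{v,f}⟩` on points whose three points
do not lie in a common 2-dimensional subspace. -/
def IsOrbitTriangle (v f : ℕ) (O : Set (Submodule (ZMod 2) (Fin v → ZMod 2))) : Prop :=
  (∃ P : Submodule (ZMod 2) (Fin v → ZMod 2), Module.finrank (ZMod 2) P = 1 ∧
    O = {P, mapMat (Avf v f) P, mapMat (Avf v f) (mapMat (Avf v f) P)} ∧ O.ncard = 3) ∧
  ¬ ∃ L : Submodule (ZMod 2) (Fin v → ZMod 2),
      Module.finrank (ZMod 2) L = 2 ∧ ∀ P ∈ O, P ≤ L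

open Module Submodule Function

theorem Nat.card_subtype_ne {α : Type*} [Finite α] (a : α) :
    Nat.card {x // x ≠ a} = Nat.card α - 1 := by
  classical
  have := Fintype.ofFinite α
  simp [Nat.card_eq_fintype_card, Fintype.card_subtype_compl]

theorem card_eq_mul_of_card_fiber_eq {X T : Type*} [Finite X] [Finite T] (p : X → T) {k : ℕ}
    (h : ∀ t, Nat.card {x // p x = t} = k) : Nat.card X = k * Nat.card T := by
  have := Fintype.ofFinite T
  rw [← Nat.card_congr (Equiv.sigmaFiberEquiv p), Nat.card_sigma,
    Finset.sum_congr rfl fun t _ => h t, Finset.sum_const, smul_eq_mul, Finset.card_univ,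
    Nat.card_eq_fintype_card, mul_comm]

theorem card_eq_three_mul_of_fiber_eq_orbit {X T : Type*} [Finite X] (σ : X → X) (p : X → T)
    (hp : Surjective p) (hσ : ∀ x, x ≠ σ x ∧ x ≠ σ (σ x) ∧ σ x ≠ σ (σ x))
    (hfib : ∀ x y, p y = p x ↔ y = x ∨ y = σ x ∨ y = σ (σ x)) :
    Nat.card X = 3 * Nat.card T := by
  have := Finite.of_surjective p hp
  refine card_eq_mul_of_card_fiber_eq p fun t => ?_
  obtain ⟨x, rfl⟩ := hp t
  obtain ⟨h₁, h₂, h₃⟩ := hσ x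
  rw [← Set.ncard_eq_three.mpr ⟨x, σ x, σ (σ x), h₁, h₂, h₃, rfl⟩, ← Nat.card_coe_set_eq]
  exact Nat.card_congr (Equiv.subtypeEquivRight fun y => hfib x y)

section Grassmannian

variable {K M : Type*} [Field K] [Fintype K] [AddCommGroup M] [Module K M] [Finite M]

theorem card_finrank_eq_mul_card_linearIndependent {k : ℕ} (hk : k ≤ finrank K M) :
    Nat.card {E : Submodule K M // finrank K E = k} *
        ∏ i : Fin k, (Fintype.card K ^ k - Fintype.card K ^ (i : ℕ)) =
      ∏ i : Fin k, (Fintype.card K ^ finrank K M - Fintype.card K ^ (i : ℕ)) := by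
  let p : {s : Fin k → M // LinearIndependent K s} → {E : Submodule K M // finrank K E = k} :=
    fun s => ⟨span K (Set.range s.1), by rw [finrank_span_eq_card s.2, Fintype.card_fin]⟩
  rw [← card_linearIndependent hk, card_eq_mul_of_card_fiber_eq p fun E => ?_, mul_comm]
  obtain ⟨E, hE⟩ := E
  have hmem {s : Fin k → M} (hs : span K (Set.range s) = E) (i : Fin k) : s i ∈ E :=
    hs ▸ subset_span ⟨i, rfl⟩
  have e : {s // p s = ⟨E, hE⟩} ≃ {t : Fin k → E // LinearIndependent K t} :=
    { toFun := fun s => ⟨fun i => ⟨s.1.1 i, hmem (congrArg Subtype.val s.2) i⟩,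
        .of_comp E.subtype s.1.2⟩
      invFun := fun t => ⟨⟨E.subtype ∘ t.1, t.2.map' _ E.ker_subtype⟩, by
        refine Subtype.ext (?_ : span K (Set.range (E.subtype ∘ t.1)) = E)
        rw [Set.range_comp, ← map_span, t.2.span_eq_top_of_card_eq_finrank' (by simp [hE]),
          map_subtype_top]⟩
      left_inv := fun _ => rfl
      right_inv := fun _ => rfl }
  rw [Nat.card_congr e, card_linearIndependent hE.ge, hE]

end Grassmannian

theorem card_finrank_eq_three {M : Type*} [AddCommGroup M] [Module (ZMod 2) M] [Finite M] :
    Nat.card {E : Submodule (ZMod 2) M // finrank (ZMod 2) E = 3} =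
      (2 ^ finrank (ZMod 2) M - 1) * (2 ^ (finrank (ZMod 2) M - 1) - 1) *
        (2 ^ (finrank (ZMod 2) M - 2) - 1) / 21 := by
  by_cases hn : 3 ≤ finrank (ZMod 2) M
  · have h := card_finrank_eq_mul_card_linearIndependent (K := ZMod 2) (M := M) hn
    norm_num [Fin.prod_univ_three, ZMod.card] at h
    generalize Nat.card _ = c at h ⊢
    generalize finrank (ZMod 2) M = n at hn h ⊢
    obtain ⟨k, rfl⟩ := Nat.exists_eq_add_of_le' (by omega : 2 ≤ n)
    rw [show k + 2 - 1 = k + 1 by omega, Nat.add_sub_cancel]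
    rw [show 2 ^ (k + 2) = 4 * 2 ^ k by ring, show 2 ^ (k + 1) = 2 * 2 ^ k by ring] at *
    have hk : 1 ≤ 2 ^ k := Nat.one_le_two_pow
    generalize 2 ^ k = t at hk h ⊢
    refine (Nat.div_eq_of_eq_mul_left (by norm_num) ?_).symm
    have : 8 * ((4 * t - 1) * (2 * t - 1) * (t - 1)) =
        (4 * t - 1) * (4 * t - 2) * (4 * t - 4) := by
      rw [show 4 * t - 2 = 2 * (2 * t - 1) by omega, show 4 * t - 4 = 4 * (t - 1) by omega]
      ring
    linarith
  · have : IsEmpty {E : Submodule (ZMod 2) M // finrank (ZMod 2) E = 3} :=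
      ⟨fun E => hn (E.2 ▸ E.1.finrank_le)⟩
    rw [Nat.card_of_isEmpty]
    interval_cases finrank (ZMod 2) M <;> rfl

theorem exists_eq_span_singleton_of_finrank_eq_one {K V : Type*} [DivisionRing K]
    [AddCommGroup V] [Module K V] {P : Submodule K V} (hP : finrank K P = 1) :
    ∃ y ≠ 0, P = span K {y} := by
  obtain ⟨y, hyP, hy0⟩ := (Submodule.ne_bot_iff P).mp fun h => by
    rw [h, finrank_bot] at hP; exact zero_ne_one hP
  have : FiniteDimensional K P := Module.finite_of_finrank_eq_succ hP
  refine ⟨y, hy0, (eq_of_le_of_finrank_le ((span_singleton_le_iff_mem y P).mpr hyP) ?_).symm⟩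
  rw [hP, finrank_span_singleton hy0]

theorem finrank_ker_funLeft {K : Type*} [Field K] {m n : ℕ} (g : Fin m → Fin n)
    (hg : Injective g) : finrank K (LinearMap.ker (LinearMap.funLeft K K g)) = n - m := by
  have := LinearMap.finrank_range_add_finrank_ker (LinearMap.funLeft K K g)
  rw [LinearMap.range_eq_top.mpr (LinearMap.funLeft_surjective_of_injective _ _ g hg),
    finrank_top, finrank_fin_fun, finrank_fin_fun] at this
  omega

section ZModTwo

variable {V : Type*} [AddCommGroup V] [Module (ZMod 2) V]

theorem ZMod.eq_zero_or_eq_one_of_two (t : ZMod 2) : t = 0 ∨ t = 1 := by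
  revert t; decide

theorem ZModModule.add_eq_zero_iff_eq {x y : V} : x + y = 0 ↔ x = y := by
  rw [add_eq_zero_iff_eq_neg, ZModModule.neg_eq_self]

theorem span_singleton_injective_zmod_two : Injective fun x : V => span (ZMod 2) {x} := by
  intro x y h
  obtain ⟨u, rfl⟩ := (span_singleton_eq_span_singleton.mp h)
  simp [Subsingleton.elim u 1]

theorem linearIndependent_zmod_two_three {a b c : V} (ha : a ≠ 0) (hb : b ≠ 0) (hc : c ≠ 0)
    (hab : a ≠ b) (hac : a ≠ c) (hbc : b ≠ c) (habc : a + b + c ≠ 0) :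
    LinearIndependent (ZMod 2) ![a, b, c] := by
  rw [Fintype.linearIndependent_iff]
  intro g hg i
  simp only [Fin.sum_univ_three, Matrix.cons_val_zero, Matrix.cons_val_one, Matrix.cons_val_two,
    Matrix.tail_cons, Matrix.head_cons] at hg
  have : g 0 = 0 ∧ g 1 = 0 ∧ g 2 = 0 := by
    rcases (g 0).eq_zero_or_eq_one_of_two with h0 | h0 <;>
    rcases (g 1).eq_zero_or_eq_one_of_two with h1 | h1 <;>
    rcases (g 2).eq_zero_or_eq_one_of_two with h2 | h2 <;>
    simp_all [ZModModule.add_eq_zero_iff_eq, add_assoc]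
  fin_cases i <;> simp [this]

end ZModTwo

section OrderThree

variable {V : Type*} [AddCommGroup V] [Module (ZMod 2) V]

def orbitSum (φ : Module.End (ZMod 2) V) : Module.End (ZMod 2) V := 1 + φ + φ * φ

/-- `x` has nonzero components both in `range (orbitSum φ)`, the fixed space of `φ`, and in
`ker (orbitSum φ)`. -/
def IsMixed (φ : Module.End (ZMod 2) V) (x : V) : Prop :=
  orbitSum φ x ≠ 0 ∧ orbitSum φ x ≠ x

def orbitSpan (φ : Module.End (ZMod 2) V) (x : V) : Submodule (ZMod 2) V :=
  span (ZMod 2) {x, φ x, φ (φ x)}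

def orbitPoints (φ : Module.End (ZMod 2) V) (x : V) : Set (Submodule (ZMod 2) V) :=
  {span (ZMod 2) {x}, span (ZMod 2) {φ x}, span (ZMod 2) {φ (φ x)}}

variable {φ : Module.End (ZMod 2) V} {x y : V}

theorem orbitSum_apply : orbitSum φ x = x + φ x + φ (φ x) := rfl

theorem mem_ker_sub_one : x ∈ LinearMap.ker (φ - 1) ↔ φ x = x := by
  simp [sub_eq_zero]

theorem map_eq_self_of_le_ker_sub_one {E : Submodule (ZMod 2) V}
    (hE : E ≤ LinearMap.ker (φ - 1)) : E.map φ = E := by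
  ext y
  constructor
  · rintro ⟨z, hz, rfl⟩
    rwa [mem_ker_sub_one.mp (hE hz)]
  · exact fun hy => ⟨y, hy, mem_ker_sub_one.mp (hE hy)⟩

theorem mem_orbitSpan_iff :
    y ∈ orbitSpan φ x ↔ ∃ a b c : ZMod 2, a • x + b • φ x + c • φ (φ x) = y := by
  simp only [orbitSpan, mem_span_insert, mem_span_singleton]
  constructor
  · rintro ⟨a, _, ⟨b, _, ⟨c, rfl⟩, rfl⟩, rfl⟩
    exact ⟨a, b, c, by abel⟩
  · rintro ⟨a, b, c, rfl⟩
    exact ⟨a, _, ⟨b, _, ⟨c, rfl⟩, rfl⟩, by abel⟩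

theorem orbitSpan_le_iff {E : Submodule (ZMod 2) V} :
    orbitSpan φ x ≤ E ↔ x ∈ E ∧ φ x ∈ E ∧ φ (φ x) ∈ E := by
  simp [orbitSpan, span_le, Set.insert_subset_iff]

theorem IsMixed.ne_zero (hx : IsMixed φ x) : x ≠ 0 := by
  rintro rfl; exact hx.1 (map_zero _)

variable (hφ : ∀ x, φ (φ (φ x)) = x)
include hφ

theorem orbitSum_map : orbitSum φ (φ x) = orbitSum φ x := by
  simp only [orbitSum_apply, hφ]; abel

theorem map_orbitSum : φ (orbitSum φ x) = orbitSum φ x := by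
  simp only [orbitSum_apply, map_add, hφ]; abel

theorem apply_eq_self_iff : φ x = x ↔ orbitSum φ x = x := by
  constructor
  · intro h
    rw [orbitSum_apply, h, h, ZModModule.add_self, zero_add]
  · intro h
    rw [← h, map_orbitSum hφ]

theorem orbitSum_orbitSum : orbitSum φ (orbitSum φ x) = orbitSum φ x :=
  ((apply_eq_self_iff hφ).mp (map_orbitSum hφ)).trans rfl

theorem range_orbitSum : LinearMap.range (orbitSum φ) = LinearMap.ker (φ - 1) := by
  ext y
  rw [LinearMap.mem_range, mem_ker_sub_one, apply_eq_self_iff hφ]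
  exact ⟨fun ⟨z, hz⟩ => hz ▸ orbitSum_orbitSum hφ, fun h => ⟨y, h⟩⟩

theorem injective_of_cube_eq_self : Injective φ :=
  fun x y h => by rw [← hφ x, ← hφ y, h]

theorem map_orbitSpan : (orbitSpan φ x).map φ = orbitSpan φ x := by
  rw [orbitSpan, map_span, Set.image_insert_eq, Set.image_pair, hφ]
  congr 1
  ext; simp only [Set.mem_insert_iff, Set.mem_singleton_iff]; tauto

theorem orbitSpan_map : orbitSpan φ (φ x) = orbitSpan φ x := by
  rw [orbitSpan, orbitSpan, hφ]
  congr 1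
  ext; simp only [Set.mem_insert_iff, Set.mem_singleton_iff]; tauto

theorem orbitPoints_map : orbitPoints φ (φ x) = orbitPoints φ x := by
  rw [orbitPoints, orbitPoints, hφ]
  ext; simp only [Set.mem_insert_iff, Set.mem_singleton_iff]; tauto

namespace IsMixed

variable (hx : IsMixed φ x)
include hx

theorem apply_ne_self : φ x ≠ x :=
  fun h => hx.2 ((apply_eq_self_iff hφ).mp h)

theorem map : IsMixed φ (φ x) := by
  refine ⟨by rw [orbitSum_map hφ]; exact hx.1, fun h => hx.apply_ne_self hφ ?_⟩
  rw [orbitSum_map hφ] at h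
  exact injective_of_cube_eq_self hφ (by rw [← h, map_orbitSum hφ])

theorem orbit_ne : x ≠ φ x ∧ x ≠ φ (φ x) ∧ φ x ≠ φ (φ x) := by
  refine ⟨(hx.apply_ne_self hφ).symm, fun h => hx.apply_ne_self hφ ?_,
    ((hx.map hφ).apply_ne_self hφ).symm⟩
  conv_lhs => rw [h, hφ]

theorem linearIndependent : LinearIndependent (ZMod 2) ![x, φ x, φ (φ x)] := by
  obtain ⟨h₁, h₂, h₃⟩ := hx.orbit_ne hφ
  exact linearIndependent_zmod_two_three hx.ne_zero (hx.map hφ).ne_zero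
    ((hx.map hφ).map hφ).ne_zero h₁ h₂ h₃ hx.1

theorem finrank_orbitSpan : finrank (ZMod 2) (orbitSpan φ x) = 3 := by
  have := finrank_span_eq_card (hx.linearIndependent hφ)
  rwa [Matrix.range_cons, Matrix.range_cons_cons_empty, Set.singleton_union,
    Fintype.card_fin] at this

end IsMixed

theorem IsMixed.mem_orbit_of_mem_orbitSpan (hy : IsMixed φ y) (hyx : y ∈ orbitSpan φ x) :
    y = x ∨ y = φ x ∨ y = φ (φ x) := by
  obtain ⟨a, b, c, rfl⟩ := mem_orbitSpan_iff.mp hyx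
  have key : orbitSum φ (a • x + b • φ x + c • φ (φ x)) = (a + b + c) • orbitSum φ x := by
    simp only [map_add, map_smul, orbitSum_map hφ, add_smul]
  obtain ⟨hy₁, hy₂⟩ := hy
  rw [key] at hy₁ hy₂
  rcases a.eq_zero_or_eq_one_of_two with rfl | rfl <;>
  rcases b.eq_zero_or_eq_one_of_two with rfl | rfl <;>
  rcases c.eq_zero_or_eq_one_of_two with rfl | rfl <;>
  simp_all [orbitSum_apply, show (1 + 1 : ZMod 2) = 0 from rfl]

theorem card_modEq_card_inf_ker_sub_one [Finite V] {E : Submodule (ZMod 2) V}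
    (hE : E.map φ ≤ E) :
    Nat.card E ≡ Nat.card (E ⊓ LinearMap.ker (φ - 1) : Submodule (ZMod 2) V) [MOD 3] := by
  classical
  have := Fintype.ofFinite E
  let g : Function.End E := fun y => ⟨φ y, hE (mem_map_of_mem y.2)⟩
  have hg : g ^ 3 ^ 1 = 1 := by
    funext y
    exact Subtype.ext (hφ y)
  have := Fact.mk Nat.prime_three
  have h := Equiv.Perm.card_fixedPoints_modEq hg
  rw [← Nat.card_eq_fintype_card, ← Nat.card_eq_fintype_card] at h
  convert h using 1
  exact Nat.card_congr
    { toFun := fun z =>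
        ⟨⟨z, (mem_inf.mp z.2).1⟩, Subtype.ext (mem_ker_sub_one.mp (mem_inf.mp z.2).2)⟩
      invFun := fun y => ⟨y.1, mem_inf.mpr ⟨y.1.2, mem_ker_sub_one.mpr (congrArg Subtype.val y.2)⟩⟩
      left_inv := fun _ => rfl
      right_inv := fun _ => rfl }

theorem exists_orbitSum_ne_zero [Finite V] {E : Submodule (ZMod 2) V} (hE : E.map φ ≤ E)
    (hE3 : finrank (ZMod 2) E = 3) : ∃ z ∈ E, orbitSum φ z ≠ 0 := by
  -- Otherwise `φ` permutes the 8 vectors of `E` fixing only `0`, but `8 ≢ 1 [MOD 3]`.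
  by_contra! h
  have hbot : E ⊓ LinearMap.ker (φ - 1) = ⊥ := by
    refine eq_bot_iff.mpr fun z hz => ?_
    obtain ⟨hzE, hz⟩ := mem_inf.mp hz
    rw [mem_bot, ← (apply_eq_self_iff hφ).mp (mem_ker_sub_one.mp hz), h z hzE]
  have := card_modEq_card_inf_ker_sub_one hφ hE
  rw [hbot, Module.natCard_eq_pow_finrank (K := ZMod 2), hE3] at this
  norm_num [Nat.ModEq] at this

theorem exists_isMixed_orbitSpan_eq [Finite V] {E : Submodule (ZMod 2) V} (hE : E.map φ ≤ E)
    (hE3 : finrank (ZMod 2) E = 3) (hEfix : ¬ E ≤ LinearMap.ker (φ - 1)) :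
    ∃ x, IsMixed φ x ∧ orbitSpan φ x = E := by
  have hmem {z : V} (hz : z ∈ E) : φ z ∈ E := hE (mem_map_of_mem hz)
  obtain ⟨y, hyE, hy⟩ := SetLike.not_le_iff_exists.mp hEfix
  rw [mem_ker_sub_one, apply_eq_self_iff hφ] at hy
  obtain ⟨x, hx, hxE⟩ : ∃ x, IsMixed φ x ∧ x ∈ E := by
    by_cases hy0 : orbitSum φ y = 0
    · obtain ⟨z, hzE, hz⟩ := exists_orbitSum_ne_zero hφ hE hE3
      have hzE' : orbitSum φ z ∈ E := add_mem (add_mem hzE (hmem hzE)) (hmem (hmem hzE))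
      refine ⟨y + orbitSum φ z, ?_, add_mem hyE hzE'⟩
      rw [IsMixed, map_add, hy0, orbitSum_orbitSum hφ, zero_add]
      exact ⟨hz, fun h => hy (by rw [right_eq_add.mp h, map_zero])⟩
    · exact ⟨y, ⟨hy0, hy⟩, hyE⟩
  refine ⟨x, hx, eq_of_le_of_finrank_le
    (orbitSpan_le_iff.mpr ⟨hxE, hmem hxE, hmem (hmem hxE)⟩) ?_⟩
  rw [hE3, hx.finrank_orbitSpan hφ]

theorem finrank_orbitSpan_of_orbitSum_eq_zero (hy0 : y ≠ 0) (hy : φ y ≠ y)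
    (h : orbitSum φ y = 0) : finrank (ZMod 2) (orbitSpan φ y) = 2 := by
  have hspan : orbitSpan φ y = span (ZMod 2) {y, φ y} := by
    refine le_antisymm (orbitSpan_le_iff.mpr ⟨subset_span (by simp), subset_span (by simp), ?_⟩)
      (span_mono (by simp [Set.insert_subset_iff]))
    rw [orbitSum_apply, ZModModule.add_eq_zero_iff_eq] at h
    rw [← h]
    exact add_mem (subset_span (by simp)) (subset_span (by simp))
  have hli : LinearIndependent (ZMod 2) ![y, φ y] := by
    refine (LinearIndependent.pair_iff' hy0).mpr fun a => ?_
    rcases a.eq_zero_or_eq_one_of_two with rfl | rfl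
    · rw [zero_smul, ne_comm, ← map_zero φ]
      exact (injective_of_cube_eq_self hφ).ne hy0
    · rw [one_smul]; exact hy.symm
  rw [hspan, ← Matrix.range_cons_cons_empty y (φ y) ![], finrank_span_eq_card hli,
    Fintype.card_fin]

omit hφ in
theorem orbitPoints_le_iff {L : Submodule (ZMod 2) V} :
    (∀ P ∈ orbitPoints φ x, P ≤ L) ↔ orbitSpan φ x ≤ L := by
  simp [orbitPoints, orbitSpan_le_iff, span_singleton_le_iff_mem]

theorem isMixed_iff_of_ne_zero [FiniteDimensional (ZMod 2) V] (hx0 : x ≠ 0) :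
    IsMixed φ x ↔ (orbitPoints φ x).ncard = 3 ∧
      ¬ ∃ L : Submodule (ZMod 2) V, finrank (ZMod 2) L = 2 ∧ orbitSpan φ x ≤ L := by
  constructor
  · intro hx
    obtain ⟨h₁, h₂, h₃⟩ := hx.orbit_ne hφ
    have hinj := span_singleton_injective_zmod_two (V := V)
    refine ⟨Set.ncard_eq_three.mpr ⟨_, _, _, hinj.ne h₁, hinj.ne h₂, hinj.ne h₃, rfl⟩, ?_⟩
    rintro ⟨L, hL, hxL⟩
    have := Submodule.finrank_mono hxL
    rw [hx.finrank_orbitSpan hφ, hL] at this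
    omega
  · rintro ⟨h3, hL⟩
    have hx : φ x ≠ x := by
      rintro h
      simp [orbitPoints, h] at h3
    refine ⟨fun h => hL ⟨_, finrank_orbitSpan_of_orbitSum_eq_zero hφ hx0 hx h, le_rfl⟩,
      fun h => hx ((apply_eq_self_iff hφ).mpr h)⟩

theorem IsMixed.orbitSpan_eq_iff (hy : IsMixed φ y) :
    orbitSpan φ y = orbitSpan φ x ↔ y = x ∨ y = φ x ∨ y = φ (φ x) := by
  constructor
  · intro h
    exact hy.mem_orbit_of_mem_orbitSpan hφ (h ▸ subset_span (by simp))
  · rintro (rfl | rfl | rfl)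
    · rfl
    · exact orbitSpan_map hφ
    · rw [orbitSpan_map hφ, orbitSpan_map hφ]

theorem orbitPoints_eq_iff :
    orbitPoints φ y = orbitPoints φ x ↔ y = x ∨ y = φ x ∨ y = φ (φ x) := by
  constructor
  · intro h
    have hy : span (ZMod 2) {y} ∈ orbitPoints φ x := h ▸ Set.mem_insert _ _
    simpa only [orbitPoints, Set.mem_insert_iff, Set.mem_singleton_iff,
      span_singleton_injective_zmod_two.eq_iff] using hy
  · rintro (rfl | rfl | rfl)
    · rfl
    · exact orbitPoints_map hφ
    · rw [orbitPoints_map hφ, orbitPoints_map hφ]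

def equivKerOrbitSumProdKerSubOne :
    V ≃ LinearMap.ker (orbitSum φ) × LinearMap.ker (φ - 1) where
  toFun x := (⟨x + orbitSum φ x, by
      rw [LinearMap.mem_ker, map_add, orbitSum_orbitSum hφ, ZModModule.add_self]⟩,
    ⟨orbitSum φ x, mem_ker_sub_one.mpr (map_orbitSum hφ)⟩)
  invFun p := p.1 + p.2
  left_inv x := by simp [add_assoc, ZModModule.add_self]
  right_inv p := by
    obtain ⟨⟨u, hu⟩, ⟨w, hw⟩⟩ := p
    rw [LinearMap.mem_ker] at hu
    rw [mem_ker_sub_one, apply_eq_self_iff hφ] at hw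
    ext <;> simp [hu, hw, add_assoc, ZModModule.add_self]

theorem card_isMixed [Finite V] :
    Nat.card {x // IsMixed φ x} =
      (Nat.card (LinearMap.ker (orbitSum φ)) - 1) * (Nat.card (LinearMap.ker (φ - 1)) - 1) := by
  have e := (equivKerOrbitSumProdKerSubOne hφ).subtypeEquiv (p := IsMixed φ)
    (q := fun p => p.1 ≠ 0 ∧ p.2 ≠ 0) fun x => by
      simp only [equivKerOrbitSumProdKerSubOne, Equiv.coe_fn_mk, ne_eq, mk_eq_zero,
        ZModModule.add_eq_zero_iff_eq, IsMixed]
      tauto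
  rw [Nat.card_congr (e.trans (Equiv.subtypeProdEquivProd (p := (· ≠ 0)) (q := (· ≠ 0)))),
    Nat.card_prod, Nat.card_subtype_ne, Nat.card_subtype_ne]

theorem card_isMixed_eq_three_mul [Finite V] {T : Type*} (p : {x // IsMixed φ x} → T)
    (hp : Surjective p)
    (hfib : ∀ x y, p y = p x ↔ y.1 = x.1 ∨ y.1 = φ x.1 ∨ y.1 = φ (φ x.1)) :
    Nat.card {x // IsMixed φ x} = 3 * Nat.card T := by
  refine card_eq_three_mul_of_fiber_eq_orbit (fun x => ⟨φ x, x.2.map hφ⟩) p hp (fun x => ?_)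
    (fun x y => by simpa only [Subtype.ext_iff] using hfib x y)
  obtain ⟨h₁, h₂, h₃⟩ := x.2.orbit_ne hφ
  simp only [ne_eq, Subtype.ext_iff]
  exact ⟨h₁, h₂, h₃⟩

end OrderThree

section Avf

variable {v f : ℕ} {x : Fin v → ZMod 2}

open Matrix

theorem vecMul_Avf_of_le (hvf : Even (v - f)) {j : Fin v} (hj : v - f ≤ j) :
    (x ᵥ* Avf v f) j = x j := by
  -- the parity of `v - f` keeps the last 2×2 block away from column `j`
  obtain ⟨r, hr⟩ := hvf
  have hcol : (fun i => Avf v f i j) = Pi.single j 1 := by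
    ext i
    simp only [Avf, of_apply, Pi.single_apply, Fin.ext_iff]
    split_ifs <;> first | rfl | (exfalso; omega)
  rw [vecMul, hcol, dotProduct_single, mul_one]

theorem vecMul_Avf_of_even {i j : Fin v} (hi : Even (i : ℕ)) (hij : (j : ℕ) = i + 1)
    (hj : (j : ℕ) < v - f) : (x ᵥ* Avf v f) i = x j := by
  obtain ⟨r, hr⟩ := hi
  have hcol : (fun l => Avf v f l i) = Pi.single j 1 := by
    ext l
    simp only [Avf, of_apply, Pi.single_apply, Fin.ext_iff]
    split_ifs <;> first | rfl | (exfalso; omega)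
  rw [vecMul, hcol, dotProduct_single, mul_one]

theorem vecMul_Avf_of_odd {i j : Fin v} (hi : Even (i : ℕ)) (hij : (j : ℕ) = i + 1)
    (hj : (j : ℕ) < v - f) : (x ᵥ* Avf v f) j = x i + x j := by
  obtain ⟨r, hr⟩ := hi
  have hcol : (fun l => Avf v f l j) = Pi.single i 1 + Pi.single j 1 := by
    ext l
    simp only [Avf, of_apply, Pi.add_apply, Pi.single_apply, Fin.ext_iff]
    split_ifs <;> first | rfl | (exfalso; omega)
  rw [vecMul, hcol, dotProduct_add, dotProduct_single, dotProduct_single, mul_one, mul_one]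

theorem exists_pair_of_lt (hvf : Even (v - f)) {j : Fin v} (hj : (j : ℕ) < v - f) :
    ∃ i k : Fin v, Even (i : ℕ) ∧ (k : ℕ) = i + 1 ∧ (k : ℕ) < v - f ∧ (j = i ∨ j = k) := by
  obtain ⟨r, hr⟩ := hvf
  rcases Nat.even_or_odd (j : ℕ) with ⟨s, hs⟩ | ⟨s, hs⟩
  · exact ⟨j, ⟨j + 1, by omega⟩, ⟨s, hs⟩, rfl, by simp; omega, Or.inl rfl⟩
  · exact ⟨⟨j - 1, by omega⟩, j, ⟨s, by simp; omega⟩, by simp; omega, hj, Or.inr rfl⟩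

theorem vecMulLinear_Avf_cube (hvf : Even (v - f)) (x : Fin v → ZMod 2) :
    (Avf v f).vecMulLinear ((Avf v f).vecMulLinear ((Avf v f).vecMulLinear x)) = x := by
  simp only [vecMulLinear_apply]
  funext j
  by_cases hj : v - f ≤ j
  · simp only [vecMul_Avf_of_le hvf hj]
  · obtain ⟨i, k, hi, hik, hk, rfl | rfl⟩ := exists_pair_of_lt hvf (not_le.mp hj) <;>
      simp only [vecMul_Avf_of_even hi hik hk, vecMul_Avf_of_odd hi hik hk] <;> grind

theorem orbitSum_Avf_apply (hvf : Even (v - f)) (x : Fin v → ZMod 2) (j : Fin v) :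
    orbitSum (Avf v f).vecMulLinear x j = if (j : ℕ) < v - f then 0 else x j := by
  simp only [orbitSum_apply, vecMulLinear_apply, Pi.add_apply]
  split_ifs with hj
  · obtain ⟨i, k, hi, hik, hk, rfl | rfl⟩ := exists_pair_of_lt hvf hj <;>
      simp only [vecMul_Avf_of_even hi hik hk, vecMul_Avf_of_odd hi hik hk] <;> grind
  · simp only [vecMul_Avf_of_le hvf (not_lt.mp hj)]
    grind

theorem finrank_ker_Avf_sub_one (hvf : Even (v - f)) (hfv : f ≤ v) :
    finrank (ZMod 2) (LinearMap.ker ((Avf v f).vecMulLinear - 1)) = f := by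
  have : LinearMap.ker ((Avf v f).vecMulLinear - 1) =
      LinearMap.ker (LinearMap.funLeft (ZMod 2) (ZMod 2) (Fin.castLE (Nat.sub_le v f))) := by
    ext x
    rw [mem_ker_sub_one, apply_eq_self_iff (vecMulLinear_Avf_cube hvf), LinearMap.mem_ker]
    simp only [funext_iff, orbitSum_Avf_apply hvf, LinearMap.funLeft_apply, Pi.zero_apply]
    refine ⟨fun h k => ?_, fun h j => ?_⟩
    · simpa [k.isLt, eq_comm] using h (Fin.castLE (Nat.sub_le v f) k)
    · split_ifs with hj
      · exact (h ⟨j, hj⟩).symm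
      · rfl
  rw [this, finrank_ker_funLeft _ (Fin.castLE_injective _)]
  omega

end Avf

section Counting

variable {v f : ℕ}

theorem mapMat_span_singleton (A : Matrix (Fin v) (Fin v) (ZMod 2)) (x : Fin v → ZMod 2) :
    mapMat A (span (ZMod 2) {x}) = span (ZMod 2) {A.vecMulLinear x} := by
  rw [mapMat, map_span, Set.image_singleton]

theorem pointwiseFixed_iff {A : Matrix (Fin v) (Fin v) (ZMod 2)}
    {E : Submodule (ZMod 2) (Fin v → ZMod 2)} :
    PointwiseFixed A E ↔ E ≤ LinearMap.ker (A.vecMulLinear - 1) := by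
  refine ⟨fun h x hx => ?_, fun h P _ hP => map_eq_self_of_le_ker_sub_one (hP.trans h)⟩
  by_cases hx0 : x = 0
  · rw [hx0]; exact zero_mem _
  have := h _ (finrank_span_singleton hx0) ((span_singleton_le_iff_mem x E).mpr hx)
  rw [mapMat_span_singleton] at this
  exact mem_ker_sub_one.mpr (span_singleton_injective_zmod_two this)

theorem isOrbitTriangle_iff (hvf : Even (v - f))
    {O : Set (Submodule (ZMod 2) (Fin v → ZMod 2))} :
    IsOrbitTriangle v f O ↔
      ∃ x, IsMixed (Avf v f).vecMulLinear x ∧ orbitPoints (Avf v f).vecMulLinear x = O := by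
  have hφ := vecMulLinear_Avf_cube hvf
  constructor
  · rintro ⟨⟨P, hP, hO, h3⟩, hL⟩
    obtain ⟨y, hy0, rfl⟩ := exists_eq_span_singleton_of_finrank_eq_one hP
    rw [mapMat_span_singleton, mapMat_span_singleton] at hO
    subst hO
    refine ⟨y, (isMixed_iff_of_ne_zero hφ hy0).mpr ⟨h3, ?_⟩, rfl⟩
    rintro ⟨L, hL2, hyL⟩
    exact hL ⟨L, hL2, orbitPoints_le_iff.mpr hyL⟩
  · rintro ⟨x, hx, rfl⟩
    obtain ⟨h3, hL⟩ := (isMixed_iff_of_ne_zero hφ hx.ne_zero).mp hx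
    refine ⟨⟨span (ZMod 2) {x}, finrank_span_singleton hx.ne_zero, ?_, h3⟩, ?_⟩
    · rw [mapMat_span_singleton, mapMat_span_singleton]; rfl
    · rintro ⟨L, hL2, hxL⟩
      exact hL ⟨L, hL2, orbitPoints_le_iff.mp hxL⟩

theorem card_isMixed_Avf (hvf : Even (v - f)) (hfv : f ≤ v) :
    Nat.card {x // IsMixed (Avf v f).vecMulLinear x} = (2 ^ f - 1) * (2 ^ (v - f) - 1) := by
  have hφ := vecMulLinear_Avf_cube hvf
  have hrank := LinearMap.finrank_range_add_finrank_ker (orbitSum (Avf v f).vecMulLinear)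
  rw [range_orbitSum hφ, finrank_ker_Avf_sub_one hvf hfv, finrank_fin_fun] at hrank
  rw [card_isMixed hφ,
    Module.natCard_eq_pow_finrank (K := ZMod 2) (V := LinearMap.ker (orbitSum _)),
    Module.natCard_eq_pow_finrank (K := ZMod 2) (V := LinearMap.ker (_ - 1)),
    finrank_ker_Avf_sub_one hvf hfv, Nat.card_zmod,
    show finrank (ZMod 2) (LinearMap.ker (orbitSum (Avf v f).vecMulLinear)) = v - f by omega,
    mul_comm]
theorem card_fixedPlane_pointwiseFixed (hvf : Even (v - f)) (hfv : f ≤ v) :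
    Nat.card {E : Submodule (ZMod 2) (Fin v → ZMod 2) |
        IsFixedPlane (Avf v f) E ∧ PointwiseFixed (Avf v f) E} =
      (2 ^ f - 1) * (2 ^ (f - 1) - 1) * (2 ^ (f - 2) - 1) / 21 := by
  set W := LinearMap.ker ((Avf v f).vecMulLinear - 1)
  have e : {E : Submodule (ZMod 2) W // finrank (ZMod 2) E = 3} ≃
      {E : Submodule (ZMod 2) (Fin v → ZMod 2) |
        IsFixedPlane (Avf v f) E ∧ PointwiseFixed (Avf v f) E} :=
    ((MapSubtype.orderIso W).toEquiv.subtypeEquiv (q := fun E => finrank (ZMod 2) E.1 = 3)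
      fun E => (finrank_map_subtype_eq W E).symm ▸ Iff.rfl).trans <|
    (Equiv.subtypeSubtypeEquivSubtypeInter (· ≤ W) (finrank (ZMod 2) · = 3)).trans <|
    Equiv.subtypeEquivRight fun E => by
      change _ ↔ IsFixedPlane _ _ ∧ _
      rw [IsFixedPlane, pointwiseFixed_iff]
      exact ⟨fun ⟨hW, h3⟩ => ⟨⟨h3, map_eq_self_of_le_ker_sub_one hW⟩, hW⟩,
        fun ⟨⟨h3, _⟩, hW⟩ => ⟨hW, h3⟩⟩
  rw [← Nat.card_congr e, card_finrank_eq_three, finrank_ker_Avf_sub_one hvf hfv]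

theorem card_fixedPlane_not_pointwiseFixed (hvf : Even (v - f)) (hfv : f ≤ v) :
    Nat.card {E : Submodule (ZMod 2) (Fin v → ZMod 2) |
        IsFixedPlane (Avf v f) E ∧ ¬ PointwiseFixed (Avf v f) E} =
      (2 ^ f - 1) * (2 ^ (v - f) - 1) / 3 := by
  have hφ := vecMulLinear_Avf_cube hvf
  let p : {x // IsMixed (Avf v f).vecMulLinear x} → {E : Submodule (ZMod 2) (Fin v → ZMod 2) |
      IsFixedPlane (Avf v f) E ∧ ¬ PointwiseFixed (Avf v f) E} := fun x =>
    ⟨orbitSpan _ x, ⟨x.2.finrank_orbitSpan hφ, map_orbitSpan hφ⟩, fun h =>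
      x.2.apply_ne_self hφ <| mem_ker_sub_one.mp (pointwiseFixed_iff.mp h (subset_span (by simp)))⟩
  have hp : Surjective p := by
    rintro ⟨E, ⟨h3, hE⟩, hfix⟩
    obtain ⟨x, hx, rfl⟩ :=
      exists_isMixed_orbitSpan_eq hφ hE.le h3 (pointwiseFixed_iff.not.mp hfix)
    exact ⟨⟨x, hx⟩, rfl⟩
  rw [← card_isMixed_Avf hvf hfv, card_isMixed_eq_three_mul hφ p hp fun x y => ?_,
    Nat.mul_div_cancel_left _ three_pos]
  simpa only [p, Subtype.ext_iff] using y.2.orbitSpan_eq_iff hφ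

theorem card_isOrbitTriangle (hvf : Even (v - f)) (hfv : f ≤ v) :
    Nat.card {O : Set (Submodule (ZMod 2) (Fin v → ZMod 2)) | IsOrbitTriangle v f O} =
      (2 ^ f - 1) * (2 ^ (v - f) - 1) / 3 := by
  have hφ := vecMulLinear_Avf_cube hvf
  let p : {x // IsMixed (Avf v f).vecMulLinear x} →
      {O : Set (Submodule (ZMod 2) (Fin v → ZMod 2)) | IsOrbitTriangle v f O} := fun x =>
    ⟨orbitPoints _ x, (isOrbitTriangle_iff hvf).mpr ⟨x, x.2, rfl⟩⟩
  have hp : Surjective p := by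
    rintro ⟨O, hO⟩
    obtain ⟨x, hx, rfl⟩ := (isOrbitTriangle_iff hvf).mp hO
    exact ⟨⟨x, hx⟩, rfl⟩
  rw [← card_isMixed_Avf hvf hfv, card_isMixed_eq_three_mul hφ p hp fun x y => ?_,
    Nat.mul_div_cancel_left _ three_pos]
  simpa only [p, Subtype.ext_iff] using orbitPoints_eq_iff hφ

end Counting

/-- Under the action of `⟨A_{v,f}⟩`, the number of fixed planes of type 7 equals the
Gaussian binomial coefficient `[f choose 3]_2 = (2^f-1)(2^{f-1}-1)(2^{f-2}-1)/21`,
and the number of fixed planes of type 1 equals `(2^f-1)(2^{v-f}-1)/3`, which is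
also the number of orbit triangles. -/
theorem stmt5 (v f : ℕ) (hf : f ≤ v - 1) (hvf : Even (v - f)) :
    Nat.card {E : Submodule (ZMod 2) (Fin v → ZMod 2) |
        IsFixedPlane (Avf v f) E ∧ PointwiseFixed (Avf v f) E}
      = (2 ^ f - 1) * (2 ^ (f - 1) - 1) * (2 ^ (f - 2) - 1) / 21 ∧
    Nat.card {E : Submodule (ZMod 2) (Fin v → ZMod 2) |
        IsFixedPlane (Avf v f) E ∧ ¬ PointwiseFixed (Avf v f) E}
      = (2 ^ f - 1) * (2 ^ (v - f) - 1) / 3 ∧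
    Nat.card {O : Set (Submodule (ZMod 2) (Fin v → ZMod 2)) | IsOrbitTriangle v f O}
      = (2 ^ f - 1) * (2 ^ (v - f) - 1) / 3 := by
  have hfv : f ≤ v := by omega
  exact ⟨card_fixedPlane_pointwiseFixed hvf hfv, card_fixedPlane_not_pointwiseFixed hvf hfv,
    card_isOrbitTriangle hvf hfv⟩
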